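/- If P is a uniform m-partition of a finite set X (all blocks have equal size), then the semigroup Γ(X,P) is regular: for every f ∈ Γ(X,P) there exists g ∈ Γ(X,P) with f = f∘g∘f. -/

import Mathlib

/-- `B : ι → Set X` is a partition of `X` into nonempty pairwise disjoint blocks. -/
def IsPartition {X ι : Type*} (B : ι → Set X) : Prop :=
  (∀ i, (B i).Nonempty) ∧ (Pairwise fun i j => Disjoint (B i) (B j)) ∧ (⋃ i, B i) = Set.univ

/-- membership in `T(X,P)`: every block maps into some block. -/
def MapsInto {X ι : Type*} (B : ι → Set X) (f : X → X) : Prop := ∀ i, ∃ j, f '' B i ⊆ B j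

/-- membership in `Γ(X,P)`: every block maps onto some block. -/
def MapsOnto {X ι : Type*} (B : ι → Set X) (f : X → X) : Prop := ∀ i, ∃ j, f '' B i = B j

/-- membership in `Σ(X,P)`. -/
def InSigma {X ι : Type*} (B : ι → Set X) (f : X → X) : Prop :=
  MapsInto B f ∧ ∀ i, (Set.range f ∩ B i).Nonempty

/-- membership in `S(X,P)`, the group of units of `T(X,P)`. -/
def IsUnitT {X ι : Type*} (B : ι → Set X) (f : X → X) : Prop :=
  MapsInto B f ∧ ∃ g, MapsInto B g ∧ f ∘ g = id ∧ g ∘ f = id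

/-- Stirling numbers of the second kind. -/
def stirling2 : ℕ → ℕ → ℕ
  | 0, 0 => 1
  | 0, _ + 1 => 0
  | _ + 1, 0 => 0
  | n + 1, k + 1 => (k + 1) * stirling2 n (k + 1) + stirling2 n k

/-!
Let `σ` be the map on blocks induced by `f ∈ Γ(X,P)`. By uniformity each surjection
`f : B k → B (σ k)` is a bijection, so its inverse is a bijection between blocks that is a section
of `f` on `B (σ k)`. Gluing such inverses on the blocks in the image of `σ` with the identity on
the remaining blocks gives `g ∈ Γ(X,P)` with `f ∘ g ∘ f = f`.
-/

theorem Set.exists_equiv_rightInverse_of_image_eq_of_card_eq {α β : Type*} {s : Set α}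
    {t : Set β} [Finite s] {f : α → β} (hst : f '' s = t) (hcard : Nat.card s = Nat.card t) :
    ∃ e : t ≃ s, ∀ y, f (e y) = y := by
  have hinj : Set.InjOn f s :=
    Set.injOn_of_ncard_image_eq (by rw [hst]; exact hcard.symm) (Set.toFinite s)
  have hbij : Set.BijOn f s t := ⟨hst ▸ Set.mapsTo_image f s, hinj, hst ▸ Set.surjOn_image f s⟩
  exact ⟨(hbij.equiv f).symm, fun y => congrArg Subtype.val ((hbij.equiv f).apply_symm_apply y)⟩

namespace IsPartition

variable {X ι : Type*} {B : ι → Set X}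

theorem exists_mem (hP : IsPartition B) (x : X) : ∃ i, x ∈ B i :=
  Set.mem_iUnion.mp (hP.2.2 ▸ Set.mem_univ x)

noncomputable def blockOf (hP : IsPartition B) (x : X) : ι :=
  (hP.exists_mem x).choose

theorem mem_blockOf (hP : IsPartition B) (x : X) : x ∈ B (hP.blockOf x) :=
  (hP.exists_mem x).choose_spec

theorem blockOf_eq_of_mem (hP : IsPartition B) {x : X} {i : ι} (hx : x ∈ B i) :
    hP.blockOf x = i := by
  by_contra h
  exact Set.disjoint_left.mp (hP.2.1 h) (hP.mem_blockOf x) hx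

noncomputable def glue (hP : IsPartition B) (e : ∀ i, B i → X) (x : X) : X :=
  e (hP.blockOf x) ⟨x, hP.mem_blockOf x⟩

theorem glue_apply_of_mem (hP : IsPartition B) (e : ∀ i, B i → X) {x : X} {i : ι}
    (hx : x ∈ B i) : hP.glue e x = e i ⟨x, hx⟩ := by
  obtain rfl := hP.blockOf_eq_of_mem hx
  rfl

theorem image_glue (hP : IsPartition B) (e : ∀ i, B i → X) (i : ι) :
    hP.glue e '' B i = Set.range (e i) := by
  ext y
  constructor
  · rintro ⟨x, hx, rfl⟩
    exact ⟨⟨x, hx⟩, (hP.glue_apply_of_mem e hx).symm⟩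
  · rintro ⟨⟨x, hx⟩, rfl⟩
    exact ⟨x, hx, hP.glue_apply_of_mem e hx⟩

theorem mapsOnto_glue (hP : IsPartition B) {τ : ι → ι} (e : ∀ i, B i ≃ B (τ i)) :
    MapsOnto B (hP.glue fun i x => e i x) := fun i =>
  ⟨τ i, by
    rw [hP.image_glue, ← Function.comp_def, Set.range_comp, (e i).range_eq_univ, Set.image_univ,
      Subtype.range_coe]⟩

end IsPartition

/-- For a uniform partition of a finite set, Γ(X,P) is regular. -/
theorem gamma_regular_of_uniform {X : Type*} [Finite X] {m : ℕ} (B : Fin m → Set X)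
    (hP : IsPartition B) (huniform : ∀ i j, Nat.card (B i) = Nat.card (B j)) :
    ∀ f : X → X, MapsOnto B f → ∃ g, MapsOnto B g ∧ f ∘ g ∘ f = f := by
  intro f hf
  choose σ hσ using hf
  have hsection : ∀ j, ∃ (i : Fin m) (e : B j ≃ B i), (∃ k, σ k = j) → ∀ y, f (e y) = y := by
    intro j
    by_cases hj : ∃ k, σ k = j
    · obtain ⟨k, rfl⟩ := hj
      obtain ⟨e, he⟩ :=
        Set.exists_equiv_rightInverse_of_image_eq_of_card_eq (hσ k) (huniform k (σ k))
      exact ⟨k, e, fun _ => he⟩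
    · exact ⟨j, Equiv.refl _, fun h => (hj h).elim⟩
  choose τ e he using hsection
  refine ⟨hP.glue fun j y => e j y, hP.mapsOnto_glue e, funext fun x => ?_⟩
  have hfx : f x ∈ B (σ (hP.blockOf x)) := hσ _ ▸ Set.mem_image_of_mem f (hP.mem_blockOf x)
  simp only [Function.comp_apply, hP.glue_apply_of_mem _ hfx]
  exact he _ ⟨_, rfl⟩ ⟨f x, hfx⟩
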